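/- arXiv:1706.06775 — 2 statements merged into one kernel-verified Lean document; each statement's English description precedes it below -/
import Mathlib

section
/- Let I = [a, b) ⊆ [0,1) be a nonempty interval and let m ≥ 2 be an integer. Define l(I) to be the largest integer l such that b ≤ ⌊a⌋_l + m·2^{-l}, where ⌊a⌋_l = 2^{-l}·⌊2^l a⌋ denotes truncation of a to l binary digits. Then b - a > (m-1)·2^{-(l(I)+1)}, and consequently l(I) > -log₂(b-a) + log₂((m-1)/2). -/
/-- Truncation of `r` to `l` binary digits: `⌊r⌋_l = 2^{-l} ⌊2^l r⌋`. -/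
noncomputable def btrunc (r : ℝ) (l : ℤ) : ℝ := (2:ℝ)^(-l) * ⌊(2:ℝ)^l * r⌋

/-- If `L = l(I)` is the largest integer `l` with
`b ≤ ⌊a⌋_l + m·2^{-l}`, then `b - a > (m-1)·2^{-(L+1)}` and
`L > -log₂(b-a) + log₂((m-1)/2)`. -/
theorem stmt0 (a b : ℝ) (m : ℕ) (hm : 2 ≤ m)
    (ha : 0 ≤ a) (hab : a < b) (hb : b ≤ 1)
    (L : ℤ)
    (hL : b ≤ btrunc a L + (m:ℝ) * (2:ℝ)^(-L))
    (hLmax : ∀ l : ℤ, b ≤ btrunc a l + (m:ℝ) * (2:ℝ)^(-l) → l ≤ L) :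
    b - a > ((m:ℝ) - 1) * (2:ℝ)^(-(L+1)) ∧
    (L:ℝ) > -Real.logb 2 (b - a) + Real.logb 2 (((m:ℝ) - 1)/2) := by
  have hm1 : (2:ℝ) ≤ (m:ℝ) := by exact_mod_cast hm
  -- maximality fails at L+1
  have key : btrunc a (L+1) + (m:ℝ) * (2:ℝ)^(-(L+1)) < b := by
    by_contra h
    push_neg at h
    have := hLmax (L+1) h
    omega
  have hpow : (0:ℝ) < (2:ℝ)^(-(L+1)) := zpow_pos (by norm_num) _
  have hfl : ((2:ℝ)^(L+1) * a) - 1 < (⌊(2:ℝ)^(L+1) * a⌋ : ℝ) := Int.sub_one_lt_floor _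
  have htr : a - (2:ℝ)^(-(L+1)) < btrunc a (L+1) := by
    unfold btrunc
    have := mul_lt_mul_of_pos_left hfl hpow
    have hid : (2:ℝ)^(-(L+1)) * ((2:ℝ)^(L+1) * a) = a := by
      rw [← mul_assoc, ← zpow_add₀ (by norm_num : (2:ℝ) ≠ 0), neg_add_cancel,
        zpow_zero, one_mul]
    nlinarith
  have h1 : b - a > ((m:ℝ) - 1) * (2:ℝ)^(-(L+1)) := by nlinarith
  refine ⟨h1, ?_⟩
  -- second part
  have hba : 0 < b - a := by linarith
  have heq : ((m:ℝ) - 1) * (2:ℝ)^(-(L+1)) = (((m:ℝ) - 1)/2) * (2:ℝ)^(-L) := by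
    rw [neg_add, zpow_add₀ (by norm_num : (2:ℝ) ≠ 0), zpow_neg_one]
    ring
  have h2 : (((m:ℝ) - 1)/2) * (2:ℝ)^(-L) < b - a := by rw [← heq]; linarith
  have hpos : (0:ℝ) < ((m:ℝ) - 1)/2 := by linarith
  have hlog := Real.logb_lt_logb (by norm_num : (1:ℝ) < 2)
      (mul_pos hpos (zpow_pos (by norm_num) _)) h2
  have hzl : Real.logb 2 ((2:ℝ)^(-L)) = (-L : ℤ) := by
    rw [Real.logb, Real.log_zpow, mul_div_assoc, div_self (ne_of_gt (Real.log_pos one_lt_two)), mul_one]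
  rw [Real.logb_mul (ne_of_gt hpos) (ne_of_gt (zpow_pos (by norm_num) _)), hzl] at hlog
  push_cast at hlog
  linarith
end

section
/- Let f : [0,1] → ℝ be integrable with mean f̄ = ∫₀¹ f(r) dr, and define G(s) = ∫₀^s (f(r) - f̄) dr for s ∈ [0,1]. Let s₀ ∈ [0,1] be a point at which G attains its maximum over [0,1]. Then for every a ∈ [0,1), (1/(1-a)) · ∫_a^1 f(⟨r + s₀⟩) dr ≥ f̄, where ⟨x⟩ denotes the fractional part of x. -/
open MeasureTheory intervalIntegral

/-- If `s₀` maximizes `G(s) = ∫₀^s (f - f̄)` over `[0,1]`, then for every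
`a ∈ [0,1)`, the average of the cyclically shifted `f` over `[a,1]` is at least `f̄`. -/
theorem stmt4 (f : ℝ → ℝ)
    (hint : IntervalIntegrable f volume 0 1)
    (hshift : ∀ s : ℝ, IntervalIntegrable (fun r => f (Int.fract (r + s))) volume 0 1)
    (fbar : ℝ) (hfbar : fbar = ∫ r in (0:ℝ)..1, f r)
    (s₀ : ℝ) (hs₀ : s₀ ∈ Set.Icc (0:ℝ) 1)
    (hmax : ∀ s ∈ Set.Icc (0:ℝ) 1,
      (∫ r in (0:ℝ)..s, (f r - fbar)) ≤ ∫ r in (0:ℝ)..s₀, (f r - fbar)) :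
    ∀ a ∈ Set.Ico (0:ℝ) 1,
      (1 / (1 - a)) * ∫ r in a..1, f (Int.fract (r + s₀)) ≥ fbar := by
  intro a ha
  obtain ⟨ha0, ha1⟩ := ha
  obtain ⟨hs0, hs1⟩ := hs₀
  have h1a : (0:ℝ) < 1 - a := by linarith
  -- integrability on subintervals of [0,1]
  have hmem : ∀ x : ℝ, x ∈ Set.Icc (0:ℝ) 1 → x ∈ Set.uIcc (0:ℝ) 1 := by
    intro x hx; rwa [Set.uIcc_of_le zero_le_one]
  have hsub : ∀ u v : ℝ, u ∈ Set.Icc (0:ℝ) 1 → v ∈ Set.Icc (0:ℝ) 1 →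
      IntervalIntegrable f volume u v := fun u v hu hv =>
    hint.mono_set (Set.uIcc_subset_uIcc (hmem u hu) (hmem v hv))
  have hsubg : ∀ u v : ℝ, u ∈ Set.Icc (0:ℝ) 1 → v ∈ Set.Icc (0:ℝ) 1 →
      IntervalIntegrable (fun r => f (Int.fract (r + s₀))) volume u v := fun u v hu hv =>
    (hshift s₀).mono_set (Set.uIcc_subset_uIcc (hmem u hu) (hmem v hv))
  -- restated maximality
  have hmax' : ∀ s ∈ Set.Icc (0:ℝ) 1,
      (∫ r in (0:ℝ)..s, f r) - s * fbar ≤ (∫ r in (0:ℝ)..s₀, f r) - s₀ * fbar := by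
    intro s hs
    have h := hmax s hs
    rw [intervalIntegral.integral_sub (hsub 0 s ⟨le_refl 0, zero_le_one⟩ hs)
        intervalIntegrable_const,
      intervalIntegral.integral_sub (hsub 0 s₀ ⟨le_refl 0, zero_le_one⟩ ⟨hs0, hs1⟩)
        intervalIntegrable_const] at h
    simp only [intervalIntegral.integral_const, smul_eq_mul, sub_zero] at h
    linarith
  -- a.e. facts
  have hne1 : ∀ᵐ x : ℝ ∂volume, x ≠ (1:ℝ) := by
    have : (volume : Measure ℝ) {(1:ℝ)} = 0 := measure_singleton _
    filter_upwards [measure_eq_zero_iff_ae_notMem.mp this] with x hx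
    simpa using hx
  have hne2 : ∀ᵐ x : ℝ ∂volume, x ≠ 1 - s₀ := by
    have : (volume : Measure ℝ) {(1 - s₀:ℝ)} = 0 := measure_singleton _
    filter_upwards [measure_eq_zero_iff_ae_notMem.mp this] with x hx
    simpa using hx
  -- main estimate
  have key : (1 - a) * fbar ≤ ∫ r in a..1, f (Int.fract (r + s₀)) := by
    by_cases hc : a + s₀ ≤ 1
    · -- split at 1 - s₀
      have hsplit : (∫ r in a..(1 - s₀), f (Int.fract (r + s₀))) +
          (∫ r in (1 - s₀)..1, f (Int.fract (r + s₀))) =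
          ∫ r in a..1, f (Int.fract (r + s₀)) :=
        intervalIntegral.integral_add_adjacent_intervals
          (hsubg a (1 - s₀) ⟨ha0, ha1.le⟩ ⟨by linarith, by linarith⟩)
          (hsubg (1 - s₀) 1 ⟨by linarith, by linarith⟩ ⟨zero_le_one, le_refl 1⟩)
      have e1 : (∫ r in a..(1 - s₀), f (Int.fract (r + s₀))) =
          ∫ r in a..(1 - s₀), f (r + s₀) := by
        apply intervalIntegral.integral_congr_ae
        filter_upwards [hne2] with x hx hxI
        rw [Set.uIoc_of_le (by linarith : a ≤ 1 - s₀)] at hxI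
        obtain ⟨hx1, hx2⟩ := hxI
        have : Int.fract (x + s₀) = x + s₀ :=
          Int.fract_eq_self.mpr ⟨by linarith, by
            have : x < 1 - s₀ := lt_of_le_of_ne hx2 hx
            linarith⟩
        rw [this]
      have e2 : (∫ r in a..(1 - s₀), f (r + s₀)) = ∫ r in (a + s₀)..1, f r := by
        simpa using intervalIntegral.integral_comp_add_right (a := a) (b := 1 - s₀) f s₀
      have e3 : (∫ r in (1 - s₀)..1, f (Int.fract (r + s₀))) =
          ∫ r in (1 - s₀)..1, f (r + (s₀ - 1)) := by
        apply intervalIntegral.integral_congr_ae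
        filter_upwards [hne1] with x hx hxI
        rw [Set.uIoc_of_le (by linarith : 1 - s₀ ≤ 1)] at hxI
        obtain ⟨hx1, hx2⟩ := hxI
        have hx2' : x < 1 ∨ s₀ < 1 := by
          rcases lt_or_eq_of_le hx2 with h | h
          · exact Or.inl h
          · exact absurd h hx
        have hfr : Int.fract (x + s₀) = x + (s₀ - 1) := by
          have heq : x + s₀ = (x + (s₀ - 1)) + (1:ℤ) := by push_cast; ring
          rw [heq, Int.fract_add_intCast]
          exact Int.fract_eq_self.mpr ⟨by linarith, by rcases hx2' with h | h <;> linarith⟩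
        rw [hfr]
      have e4 : (∫ r in (1 - s₀)..1, f (r + (s₀ - 1))) = ∫ r in (0:ℝ)..s₀, f r := by
        have := intervalIntegral.integral_comp_add_right (a := 1 - s₀) (b := 1) f (s₀ - 1)
        rw [this]
        norm_num
      have hadj : (∫ r in (0:ℝ)..(a + s₀), f r) + (∫ r in (a + s₀)..1, f r) =
          ∫ r in (0:ℝ)..1, f r :=
        intervalIntegral.integral_add_adjacent_intervals
          (hsub 0 (a + s₀) ⟨le_refl 0, zero_le_one⟩ ⟨by linarith, hc⟩)
          (hsub (a + s₀) 1 ⟨by linarith, hc⟩ ⟨zero_le_one, le_refl 1⟩)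
      have hm := hmax' (a + s₀) ⟨by linarith, hc⟩
      rw [← hsplit, e1, e2, e3, e4]
      rw [hfbar] at *
      linarith
    · -- a + s₀ > 1 : whole interval wraps
      push_neg at hc
      have e3 : (∫ r in a..1, f (Int.fract (r + s₀))) =
          ∫ r in a..1, f (r + (s₀ - 1)) := by
        apply intervalIntegral.integral_congr_ae
        filter_upwards [hne1] with x hx hxI
        rw [Set.uIoc_of_le ha1.le] at hxI
        obtain ⟨hx1, hx2⟩ := hxI
        have hx2' : x < 1 := lt_of_le_of_ne hx2 hx
        have hfr : Int.fract (x + s₀) = x + (s₀ - 1) := by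
          have heq : x + s₀ = (x + (s₀ - 1)) + (1:ℤ) := by push_cast; ring
          rw [heq, Int.fract_add_intCast]
          exact Int.fract_eq_self.mpr ⟨by linarith, by linarith⟩
        rw [hfr]
      have e4 : (∫ r in a..1, f (r + (s₀ - 1))) = ∫ r in (a + s₀ - 1)..s₀, f r := by
        have := intervalIntegral.integral_comp_add_right (a := a) (b := 1) f (s₀ - 1)
        rw [this]
        norm_num
        ring_nf
      have hadj : (∫ r in (0:ℝ)..(a + s₀ - 1), f r) + (∫ r in (a + s₀ - 1)..s₀, f r) =
          ∫ r in (0:ℝ)..s₀, f r :=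
        intervalIntegral.integral_add_adjacent_intervals
          (hsub 0 (a + s₀ - 1) ⟨le_refl 0, zero_le_one⟩ ⟨by linarith, by linarith⟩)
          (hsub (a + s₀ - 1) s₀ ⟨by linarith, by linarith⟩ ⟨hs0, hs1⟩)
      have hm := hmax' (a + s₀ - 1) ⟨by linarith, by linarith⟩
      rw [e3, e4]
      linarith
  calc fbar = (1 / (1 - a)) * ((1 - a) * fbar) := by field_simp
    _ ≤ (1 / (1 - a)) * ∫ r in a..1, f (Int.fract (r + s₀)) := by
        apply mul_le_mul_of_nonneg_left key
        positivity
end
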